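/- Let 𝓗 be a connected hypergraph on H equipped with a total order on H, and let μ ∈ ℝ^H be any vector with strictly decreasing coordinates, i.e., μ_x > μ_y whenever x < y in H. Then for any two distinct constructions S and T of 𝓗 that are joined by an edge, ⟨μ, v^S⟩ ≠ ⟨μ, v^T⟩; that is, μ is not perpendicular to v^S − v^T, so μ is an orientation vector for the Postnikov realization of the nestohedron of 𝓗. -/

import Mathlib

open scoped Classical

noncomputable section

/-! ## Hypergraphs (nestohedra combinatorics), after Curien–Laplante-Anfossi:
hypergraphs, restrictions, connectivity, saturation, reconnected restriction,
constructs/constructions, the face order, the flip rewriting, and terms over the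
associated signatures. -/

/-- A hypergraph on a finite vertex set: a finite set of nonempty hyperedges whose union is
the vertex set, assumed atomic (every singleton is a hyperedge). -/
structure NHypergraph (α : Type*) [DecidableEq α] where
  verts : Finset α
  edges : Finset (Finset α)
  edges_nonempty : ∀ e ∈ edges, e.Nonempty
  edges_subset : ∀ e ∈ edges, e ⊆ verts
  atomic : ∀ v ∈ verts, {v} ∈ edges

namespace NHypergraph

variable {α : Type*} [DecidableEq α]

/-- The plain restriction `𝓗_X` of a hypergraph to a subset `X` of its vertices. -/
def restrict (H : NHypergraph α) (X : Finset α) : NHypergraph α where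
  verts := X ∩ H.verts
  edges := H.edges.filter (· ⊆ X)
  edges_nonempty e he := H.edges_nonempty e (Finset.mem_filter.mp he).1
  edges_subset e he :=
    Finset.subset_inter (Finset.mem_filter.mp he).2 (H.edges_subset e (Finset.mem_filter.mp he).1)
  atomic v hv := by
    rcases Finset.mem_inter.mp hv with ⟨h1, h2⟩
    exact Finset.mem_filter.mpr ⟨H.atomic v h2, Finset.singleton_subset_iff.mpr h1⟩

/-- A hypergraph is connected if its vertex set is nonempty and admits no nontrivial
partition `X₁ ∪ X₂` such that every edge lies in `X₁` or in `X₂`. -/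
def Connected (H : NHypergraph α) : Prop :=
  H.verts.Nonempty ∧ ∀ X₁ X₂ : Finset α, X₁.Nonempty → X₂.Nonempty →
    Disjoint X₁ X₂ → X₁ ∪ X₂ = H.verts → ∃ e ∈ H.edges, ¬e ⊆ X₁ ∧ ¬e ⊆ X₂

/-- `C` is (the vertex set of) a connected component of `H`: a maximal connected subset. -/
def IsComponent (H : NHypergraph α) (C : Finset α) : Prop :=
  C ⊆ H.verts ∧ (H.restrict C).Connected ∧
    ∀ D : Finset α, C ⊆ D → D ⊆ H.verts → (H.restrict D).Connected → D = C

/-- `y` and `z` lie in the same connected component of `H`. -/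
def SameComponent (H : NHypergraph α) (y z : α) : Prop :=
  ∃ C : Finset α, H.IsComponent C ∧ y ∈ C ∧ z ∈ C

/-- The saturation `Sat(𝓗)`: the set of (nonempty) connected subsets of vertices. -/
def sat (H : NHypergraph α) : Finset (Finset α) :=
  H.verts.powerset.filter fun X => (H.restrict X).Connected

theorem singleton_connected (H : NHypergraph α) {v : α} (hv : v ∈ H.verts) :
    (H.restrict {v}).Connected := by
  constructor
  · exact ⟨v, Finset.mem_inter.mpr ⟨Finset.mem_singleton_self v, hv⟩⟩
  · intro X₁ X₂ h₁ h₂ hd hu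
    exfalso
    have hv' : ({v} : Finset α) ∩ H.verts = {v} :=
      Finset.inter_eq_left.mpr (Finset.singleton_subset_iff.mpr hv)
    have hu' : X₁ ∪ X₂ = ({v} : Finset α) := hu.trans hv'
    have hX₁ : X₁ ⊆ {v} := hu' ▸ Finset.subset_union_left
    have hX₂ : X₂ ⊆ {v} := hu' ▸ Finset.subset_union_right
    obtain ⟨a, ha⟩ := h₁
    obtain ⟨b, hb⟩ := h₂
    have ha' := Finset.mem_singleton.mp (hX₁ ha)
    have hb' := Finset.mem_singleton.mp (hX₂ hb)
    subst ha'; exact Finset.disjoint_left.mp hd ha (hb' ▸ hb)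

/-- The reconnected restriction `𝓗 ↾ X` of `𝓗` to `X`. -/
def reconRestrict (H : NHypergraph α) (X : Finset α) : NHypergraph α where
  verts := X ∩ H.verts
  edges := (H.sat.image (· ∩ X)).filter (·.Nonempty)
  edges_nonempty e he := (Finset.mem_filter.mp he).2
  edges_subset := by
    intro e he
    rcases Finset.mem_image.mp (Finset.mem_filter.mp he).1 with ⟨Z, hZ, rfl⟩
    have hZv : Z ⊆ H.verts := Finset.mem_powerset.mp (Finset.mem_filter.mp hZ).1
    exact fun a ha => Finset.mem_inter.mpr
      ⟨(Finset.mem_inter.mp ha).2, hZv (Finset.mem_inter.mp ha).1⟩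
  atomic := by
    intro v hv
    rcases Finset.mem_inter.mp hv with ⟨h1, h2⟩
    refine Finset.mem_filter.mpr ⟨Finset.mem_image.mpr ⟨{v}, ?_, ?_⟩, ?_⟩
    · exact Finset.mem_filter.mpr
        ⟨Finset.mem_powerset.mpr (Finset.singleton_subset_iff.mpr h2),
         H.singleton_connected h2⟩
    · exact Finset.inter_eq_left.mpr (Finset.singleton_subset_iff.mpr h1)
    · exact ⟨v, by simp [Finset.inter_eq_left.mpr (Finset.singleton_subset_iff.mpr h1)]⟩

/-- `x ⇝ {y,z}` in `𝓗`: after removing `x`, the vertices `y` and `z` lie in the same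
connected component.  Its negation is "`x` disconnects `y` and `z` in `𝓗`". -/
def Links (H : NHypergraph α) (x y z : α) : Prop :=
  (H.restrict (H.verts \ {x})).SameComponent y z

/-- A hypergraph is contextual if for every connected subset `Y` of cardinality at least 3
and all distinct `x, y, z ∈ Y`, `x` disconnects `y` and `z` in `𝓗_Y` iff it does in `𝓗`. -/
def Contextual (H : NHypergraph α) : Prop :=
  ∀ Y : Finset α, Y ⊆ H.verts → (H.restrict Y).Connected → 3 ≤ Y.card →
    ∀ x y z : α, x ∈ Y → y ∈ Y → z ∈ Y → x ≠ y → y ≠ z → x ≠ z →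
      ((H.restrict Y).Links x y z ↔ H.Links x y z)

end NHypergraph

/-- Finite rooted trees with nodes decorated by finite sets (potential constructs). -/
inductive FTree (α : Type*) : Type _ where
  | node : Finset α → List (FTree α) → FTree α

namespace FTree

variable {α : Type*} [DecidableEq α]

/-- The decoration of the root node. -/
def label : FTree α → Finset α
  | node Y _ => Y

/-- The list of children of the root node. -/
def children : FTree α → List (FTree α)
  | node _ ts => ts

/-- The support of a tree: the union of the decorations of its nodes. -/
def support : FTree α → Finset α
  | node Y [] => Y
  | node Y (t :: ts) => support t ∪ support (node Y ts)

/-- The list of decorations of the nodes of a tree. -/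
def labels : FTree α → List (Finset α)
  | node Y [] => [Y]
  | node Y (t :: ts) => labels t ++ labels (node Y ts)

/-- The dimension of a construct: the sum over its nodes `X` of `|X| - 1`. -/
def dim (T : FTree α) : ℕ := (T.labels.map fun X => X.card - 1).sum

mutual
  /-- The (full) subtree rooted at the node decorated by `X`, if any. -/
  def subtreeAt : FTree α → Finset α → Option (FTree α)
    | node Y ts, X => if Y = X then some (node Y ts) else subtreeAtList ts X
  def subtreeAtList : List (FTree α) → Finset α → Option (FTree α)
    | [], _ => none
    | t :: ts, X => (subtreeAt t X).elim (subtreeAtList ts X) some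
end

/-- The support `supp (T ↾ X)` of the subtree rooted at the node decorated by `X`
(or `∅` if there is no such node). -/
def suppAt (T : FTree α) (X : Finset α) : Finset α :=
  ((T.subtreeAt X).map support).getD ∅

mutual
  /-- The list of supports of the subtrees rooted at the nodes of `T` (its nested set). -/
  def nests : FTree α → List (Finset α)
    | node Y ts => support (node Y ts) :: nestsList ts
  def nestsList : List (FTree α) → List (Finset α)
    | [] => []
    | t :: ts => nests t ++ nestsList ts
end

/-- The nested set of a tree, as a finite set. -/
def nestSet (T : FTree α) : Finset (Finset α) := T.nests.toFinset

/-- `S ≺ T` (`S` is covered by `T`) in the face order: `T` is obtained from `S` by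
contracting one edge between a node and its father (equivalently, the nested set of `T`
is obtained from that of `S` by removing one non-root element). -/
def CoveredBy (S T : FTree α) : Prop :=
  ∃ N ∈ S.nests, N ≠ S.support ∧ T.nestSet = S.nestSet.erase N

/-- The face (subface) order `S ≼ T` on constructs: the reflexive–transitive closure of
the covering relation `≺`. -/
def FaceLe (S T : FTree α) : Prop := Relation.ReflTransGen CoveredBy S T

/-- `IsSubtree S T`: `S` is a (full) subtree of `T`. -/
inductive IsSubtree : FTree α → FTree α → Prop
  | refl (t : FTree α) : IsSubtree t t
  | child {s t u : FTree α} : IsSubtree s t → t ∈ u.children → IsSubtree s u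

/-- In `T`, the node decorated by `X` has a child decorated by `Y`. -/
def ParentChild (X Y : Finset α) (T : FTree α) : Prop :=
  ∃ R : FTree α, IsSubtree R T ∧ R.label = X ∧ ∃ t ∈ R.children, t.label = Y

mutual
  /-- Pruning: remove all (subtrees rooted at) nodes whose decoration is not a subset
  of `X`, keeping the root. -/
  def prune (X : Finset α) : FTree α → FTree α
    | node Y ts => node Y (pruneList X ts)
  def pruneList (X : Finset α) : List (FTree α) → List (FTree α)
    | [] => []
    | t :: ts => if t.label ⊆ X then prune X t :: pruneList X ts else pruneList X ts
end

end FTree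

/-- `IsConstruct H T`: the tree `T` is a construct of the hypergraph `H`: its root `Y` is a
nonempty subset of the vertices, its children are constructs of the connected components of
`𝓗 ∖ Y` (one for each component, listed by increasing maximal vertex). -/
inductive IsConstruct {α : Type*} [LinearOrder α] : NHypergraph α → FTree α → Prop
  | node {H : NHypergraph α} (Y : Finset α) (ts : List (FTree α))
      (hY : Y.Nonempty) (hYsub : Y ⊆ H.verts)
      (hmem : ∀ t ∈ ts, (H.restrict (H.verts \ Y)).IsComponent t.support)
      (hcover : ∀ C : Finset α, (H.restrict (H.verts \ Y)).IsComponent C →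
        ∃ t ∈ ts, t.support = C)
      (hsorted : ts.Pairwise fun a b => a.support.max < b.support.max)
      (hchild : ∀ t ∈ ts, IsConstruct (H.restrict t.support) t) :
      IsConstruct H (FTree.node Y ts)

section ConstructionOrder

variable {α : Type*} [LinearOrder α]

/-- A construction: a construct all of whose nodes are singletons (a vertex of the
nestohedron). -/
def IsConstruction (H : NHypergraph α) (T : FTree α) : Prop :=
  IsConstruct H T ∧ ∀ X ∈ T.labels, X.card = 1

/-- An `X`-face: a 2-dimensional construct whose unique non-singleton node is decorated
by `X`, of cardinality 3. -/
def IsXFace (H : NHypergraph α) (X : Finset α) (T : FTree α) : Prop :=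
  IsConstruct H T ∧ X.card = 3 ∧ X ∈ T.labels ∧ ∀ Y ∈ T.labels, Y ≠ X → Y.card = 1

/-- Two distinct constructions are joined by an edge of the nestohedron: both are covered
by a common 1-dimensional construct. -/
def EdgeJoined (H : NHypergraph α) (S T : FTree α) : Prop :=
  IsConstruction H S ∧ IsConstruction H T ∧ S ≠ T ∧
  ∃ V : FTree α, IsConstruct H V ∧ V.dim = 1 ∧ FTree.CoveredBy S V ∧ FTree.CoveredBy T V

/-- The flip rewriting relation `S → T` on constructions of an ordered hypergraph:
`S` and `T` are the two endpoints of an edge whose 1-dimensional face has unique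
non-singleton node `{x, y}` with `x < y`, and in `S` the node `{x}` is the parent of the
node `{y}`. -/
def Flip (H : NHypergraph α) (S T : FTree α) : Prop :=
  IsConstruction H S ∧ IsConstruction H T ∧ S ≠ T ∧
  ∃ (V : FTree α) (x y : α), IsConstruct H V ∧ V.dim = 1 ∧ x ≠ y ∧
    ({x, y} : Finset α) ∈ V.labels ∧ FTree.CoveredBy S V ∧ FTree.CoveredBy T V ∧
    FTree.ParentChild ({x} : Finset α) ({y} : Finset α) S ∧ x < y

/-- The coordinate vector of a construction `S` of `H`:
`v^S_x = |{e ∈ Sat(𝓗) : x ∈ e ⊆ supp (S ↾ x)}|`. -/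
def coordVec (H : NHypergraph α) (S : FTree α) (x : α) : ℕ :=
  (H.sat.filter fun e => x ∈ e ∧ e ⊆ S.suppAt {x}).card

end ConstructionOrder

/-- Raw terms over the signature `Σ_𝓗` (and `Σ^c_𝓗`): variables are (connected) subsets,
function symbols are pairs `(X, Y)` of subsets, applied to a list of arguments. -/
inductive HTerm (α : Type*) : Type _ where
  | var : Finset α → HTerm α
  | app : Finset α → Finset α → List (HTerm α) → HTerm α

namespace HTerm

variable {α : Type*} [DecidableEq α]

/-- The (output) sort of a term. -/
def sortOf : HTerm α → Finset α
  | var A => A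
  | app _ Y _ => Y

/-- The list of variables occurring in a term. -/
def varsList : HTerm α → List (Finset α)
  | var A => [A]
  | app _ _ [] => []
  | app X Y (t :: ts) => varsList t ++ varsList (app X Y ts)

/-- The list of first components of the function symbols occurring in a term. -/
def appFirsts : HTerm α → List (Finset α)
  | var _ => []
  | app X _ [] => [X]
  | app X Y (t :: ts) => appFirsts t ++ appFirsts (app X Y ts)

/-- A term is closed if it contains no variables. -/
def Closed (t : HTerm α) : Prop := t.varsList = []

/-- The union `⋃ var(t)` of the variables of a term. -/
def varsUnion (t : HTerm α) : Finset α := t.varsList.foldr (· ∪ ·) ∅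

mutual
  /-- Projection of a term to a decorated tree: every function symbol `(X, Y)` is sent to
  its first component `X`, and all variables are pruned. -/
  def toTree : HTerm α → FTree α
    | .var A => .node A []
    | .app X _ ts => .node X (toTreeList ts)
  def toTreeList : List (HTerm α) → List (FTree α)
    | [] => []
    | .var _ :: ts => toTreeList ts
    | t :: ts => toTree t :: toTreeList ts
end

end HTerm

/-- Well-formed terms over the signature `Σ_𝓗` associated with the hypergraph `H`:
a variable is a connected subset (its own sort); a function symbol `(X, Y)` (with
`∅ ≠ X ⊆ Y ⊆ H` and `Y` connected) is applied to arguments whose sorts are exactly the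
connected components of `𝓗_Y ∖ X`, listed by increasing maximal vertex. -/
inductive IsTerm {α : Type*} [LinearOrder α] (H : NHypergraph α) : HTerm α → Prop
  | var (A : Finset α) : A ⊆ H.verts → (H.restrict A).Connected → IsTerm H (.var A)
  | app (X Y : Finset α) (ts : List (HTerm α)) :
      X.Nonempty → X ⊆ Y → Y ⊆ H.verts → (H.restrict Y).Connected →
      (∀ t ∈ ts, (H.restrict (Y \ X)).IsComponent t.sortOf) →
      (∀ C : Finset α, (H.restrict (Y \ X)).IsComponent C → ∃ t ∈ ts, t.sortOf = C) →
      ts.Pairwise (fun a b => a.sortOf.max < b.sortOf.max) →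
      (∀ t ∈ ts, IsTerm H t) →
      IsTerm H (.app X Y ts)


/-!
Let `V` be the 1-dimensional construct covering `S` and `T`, `{x, y}` its pair node, and `W` the
support of the subtree of `V` at that node; `W` is connected. Each endpoint splits the node
`{x, y}`: one of `{x}`, `{y}` becomes the node with support `W`, the other roots a connected
component of `W` minus that vertex, and all other nests are those of `V`. If `S` and `T` split the
pair the same way, they have the same nested set and hence coincide, since a construct is determined
by its nested set. Otherwise `v^S` and `v^T` agree outside `{x, y}`, and the `c > 0` connected sets
`e` with `{x, y} ⊆ e ⊆ W` are counted at `y` in one vector and at `x` in the other, so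
`⟨μ, v^S - v^T⟩ = ±(μ_y - μ_x) c`, which is nonzero because `μ` is injective.
-/

theorem Finset.sum_mul_ne_of_shift {ι : Type*} [DecidableEq ι] {s : Finset ι}
    {μ f g : ι → ℝ} {x y : ι} (hxy : x ≠ y) (hx : x ∈ s) (hy : y ∈ s) (hμ : μ x ≠ μ y)
    {c : ℝ} (hc : c ≠ 0) (hgx : g x = f x + c) (hfy : f y = g y + c)
    (hrest : ∀ w ∈ s, w ≠ x → w ≠ y → f w = g w) :
    ∑ w ∈ s, μ w * f w ≠ ∑ w ∈ s, μ w * g w := by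
  intro heq
  have hdiff : ∑ w ∈ s, μ w * (f w - g w) = 0 := by
    simp only [mul_sub, Finset.sum_sub_distrib, heq, sub_self]
  rw [← Finset.sum_subset (Finset.insert_subset hx (Finset.singleton_subset_iff.mpr hy))
    fun w hw hwxy => by
      simp only [Finset.mem_insert, Finset.mem_singleton, not_or] at hwxy
      rw [hrest w hw hwxy.1 hwxy.2, sub_self, mul_zero],
    Finset.sum_pair hxy, hgx, hfy] at hdiff
  have : (μ y - μ x) * c = 0 := by linear_combination hdiff
  rcases mul_eq_zero.mp this with h | h
  · exact hμ (sub_eq_zero.mp h).symm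
  · exact hc h

namespace NHypergraph

variable {α : Type*} [DecidableEq α] {G : NHypergraph α}

theorem ext {H₁ H₂ : NHypergraph α} (hv : H₁.verts = H₂.verts)
    (he : H₁.edges = H₂.edges) : H₁ = H₂ := by
  cases H₁; cases H₂; simp_all

@[simp] theorem restrict_verts (X : Finset α) : (G.restrict X).verts = X ∩ G.verts := rfl

theorem mem_restrict_edges {X e : Finset α} :
    e ∈ (G.restrict X).edges ↔ e ∈ G.edges ∧ e ⊆ X := Finset.mem_filter

theorem restrict_verts_of_subset {X : Finset α} (hX : X ⊆ G.verts) :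
    (G.restrict X).verts = X := Finset.inter_eq_left.mpr hX

theorem restrict_restrict {A B : Finset α} (hBA : B ⊆ A) :
    (G.restrict A).restrict B = G.restrict B := by
  refine ext ?_ ?_
  · simp only [restrict_verts, ← Finset.inter_assoc, Finset.inter_eq_left.mpr hBA]
  · ext e
    simp only [mem_restrict_edges]
    exact ⟨fun h => ⟨h.1.1, h.2⟩, fun h => ⟨⟨h.1, h.2.trans hBA⟩, h.2⟩⟩

theorem restrict_self : G.restrict G.verts = G := by
  refine ext (by simp) ?_
  ext e
  simp only [mem_restrict_edges]
  exact ⟨fun h => h.1, fun h => ⟨h, G.edges_subset e h⟩⟩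

theorem mem_sat {e : Finset α} : e ∈ G.sat ↔ e ⊆ G.verts ∧ (G.restrict e).Connected := by
  simp [sat]

theorem Connected.subset_or_subset {C X₁ X₂ : Finset α} (hC : C ⊆ G.verts)
    (hCc : (G.restrict C).Connected) (hd : Disjoint X₁ X₂) (hu : C ⊆ X₁ ∪ X₂)
    (hno : ∀ e ∈ G.edges, e ⊆ C → e ⊆ X₁ ∨ e ⊆ X₂) : C ⊆ X₁ ∨ C ⊆ X₂ := by
  by_contra! h
  obtain ⟨a, haC, ha₁⟩ := Finset.not_subset.mp h.1
  obtain ⟨b, hbC, hb₂⟩ := Finset.not_subset.mp h.2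
  have ha₂ : a ∈ X₂ := (Finset.mem_union.mp (hu haC)).resolve_left ha₁
  have hb₁ : b ∈ X₁ := (Finset.mem_union.mp (hu hbC)).resolve_right hb₂
  obtain ⟨e, he, he₁, he₂⟩ := hCc.2 (X₁ ∩ C) (X₂ ∩ C) ⟨b, Finset.mem_inter.mpr ⟨hb₁, hbC⟩⟩
    ⟨a, Finset.mem_inter.mpr ⟨ha₂, haC⟩⟩
    (hd.mono Finset.inter_subset_left Finset.inter_subset_left)
    (by rw [restrict_verts_of_subset hC, ← Finset.union_inter_distrib_right,
      Finset.inter_eq_right.mpr hu])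
  obtain ⟨he, heC⟩ := mem_restrict_edges.mp he
  rcases hno e he heC with h' | h'
  · exact he₁ (Finset.subset_inter h' heC)
  · exact he₂ (Finset.subset_inter h' heC)

theorem connected_union {C D : Finset α} (hC : C ⊆ G.verts) (hD : D ⊆ G.verts)
    (hCc : (G.restrict C).Connected) (hDc : (G.restrict D).Connected)
    (hCD : (C ∩ D).Nonempty) : (G.restrict (C ∪ D)).Connected := by
  rw [Connected, restrict_verts_of_subset (Finset.union_subset hC hD)]
  refine ⟨hCD.mono (Finset.inter_subset_left.trans Finset.subset_union_left), ?_⟩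
  intro X₁ X₂ h₁ h₂ hd hu
  by_contra! hno
  have hno' : ∀ e ∈ G.edges, e ⊆ C ∪ D → e ⊆ X₁ ∨ e ⊆ X₂ := fun e he heCD =>
    or_iff_not_imp_left.mpr (hno e (mem_restrict_edges.mpr ⟨he, heCD⟩))
  have side : ∀ {Z}, Z ⊆ C ∪ D → Z ⊆ G.verts → (G.restrict Z).Connected → Z ⊆ X₁ ∨ Z ⊆ X₂ :=
    fun hZ hZv hZc => hZc.subset_or_subset hZv hd (hZ.trans hu.ge)
      fun e he heZ => hno' e he (heZ.trans hZ)
  obtain ⟨p, hp⟩ := hCD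
  obtain ⟨hpC, hpD⟩ := Finset.mem_inter.mp hp
  rcases side Finset.subset_union_left hC hCc with hCX | hCX <;>
    rcases side Finset.subset_union_right hD hDc with hDX | hDX
  · obtain ⟨q, hq⟩ := h₂
    exact Finset.disjoint_left.mp hd
      (Finset.union_subset hCX hDX (hu ▸ Finset.mem_union_right _ hq)) hq
  · exact Finset.disjoint_left.mp hd (hCX hpC) (hDX hpD)
  · exact Finset.disjoint_left.mp hd (hDX hpD) (hCX hpC)
  · obtain ⟨q, hq⟩ := h₁
    exact Finset.disjoint_left.mp hd hq
      (Finset.union_subset hCX hDX (hu ▸ Finset.mem_union_left _ hq))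

theorem exists_isComponent_mem {v : α} (hv : v ∈ G.verts) : ∃ C, G.IsComponent C ∧ v ∈ C := by
  set F := G.verts.powerset.filter fun X => v ∈ X ∧ (G.restrict X).Connected
  have hF : F.Nonempty := ⟨{v}, Finset.mem_filter.mpr ⟨Finset.mem_powerset.mpr
    (Finset.singleton_subset_iff.mpr hv), Finset.mem_singleton_self v, G.singleton_connected hv⟩⟩
  obtain ⟨C, hCF, hmax⟩ := F.exists_max_image Finset.card hF
  rw [Finset.mem_filter, Finset.mem_powerset] at hCF
  refine ⟨C, ⟨hCF.1, hCF.2.2, fun D hCD hDv hDc => ?_⟩, hCF.2.1⟩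
  have hDF : D ∈ F := Finset.mem_filter.mpr ⟨Finset.mem_powerset.mpr hDv, hCD hCF.2.1, hDc⟩
  exact (Finset.eq_of_subset_of_card_le hCD (hmax D hDF)).symm

theorem IsComponent.subset_of_connected {C Z : Finset α} (hC : G.IsComponent C)
    (hZ : Z ⊆ G.verts) (hZc : (G.restrict Z).Connected) (hZC : (Z ∩ C).Nonempty) : Z ⊆ C := by
  have hCZ := hC.2.2 (C ∪ Z) Finset.subset_union_left (Finset.union_subset hC.1 hZ)
    (connected_union hC.1 hZ hC.2.1 hZc (by rwa [Finset.inter_comm]))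
  exact hCZ ▸ Finset.subset_union_right

theorem IsComponent.eq_of_mem {C D : Finset α} (hC : G.IsComponent C) (hD : G.IsComponent D)
    {v : α} (hvC : v ∈ C) (hvD : v ∈ D) : C = D :=
  (hD.subset_of_connected hC.1 hC.2.1 ⟨v, Finset.mem_inter.mpr ⟨hvC, hvD⟩⟩).antisymm
    (hC.subset_of_connected hD.1 hD.2.1 ⟨v, Finset.mem_inter.mpr ⟨hvD, hvC⟩⟩)

theorem IsComponent.subset_restrict {X C : Finset α} (hC : (G.restrict X).IsComponent C) :
    C ⊆ X :=
  hC.1.trans Finset.inter_subset_left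

theorem IsComponent.connected_restrict {X C : Finset α} (hC : (G.restrict X).IsComponent C) :
    (G.restrict C).Connected := by
  simpa only [restrict_restrict hC.subset_restrict] using hC.2.1

open Finset in
theorem card_sat_subset_eq_add {W N : Finset α} {x y : α}
    (hN : (G.restrict (W \ {y})).IsComponent N) (hx : x ∈ N) :
    #{e ∈ G.sat | x ∈ e ∧ e ⊆ W} =
      #{e ∈ G.sat | x ∈ e ∧ e ⊆ N} + #{e ∈ G.sat | {x, y} ⊆ e ∧ e ⊆ W} := by
  have hNW : N ⊆ W \ {y} := hN.subset_restrict
  rw [← card_filter_add_card_filter_not (fun e => y ∈ e), filter_filter, filter_filter,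
    add_comm]
  congr 2
  · ext e
    simp only [mem_filter, and_congr_right_iff]
    intro he
    constructor
    · rintro ⟨⟨hxe, heW⟩, hye⟩
      have heWy : e ⊆ W \ {y} := fun a ha =>
        mem_sdiff.mpr ⟨heW ha, fun h => hye (mem_singleton.mp h ▸ ha)⟩
      refine ⟨hxe, hN.subset_of_connected ?_ ?_ ⟨x, mem_inter.mpr ⟨hxe, hx⟩⟩⟩
      · exact subset_inter heWy (mem_sat.mp he).1
      · rw [restrict_restrict heWy]; exact (mem_sat.mp he).2
    · rintro ⟨hxe, heN⟩
      exact ⟨⟨hxe, (heN.trans hNW).trans sdiff_subset⟩,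
        fun hye => (mem_sdiff.mp (hNW (heN hye))).2 (mem_singleton_self y)⟩
  · ext e
    simp only [mem_filter, insert_subset_iff, singleton_subset_iff]
    tauto

end NHypergraph

namespace FTree

variable {α : Type*}

@[elab_as_elim]
theorem ind {motive : FTree α → Prop}
    (node : ∀ Y ts, (∀ t ∈ ts, motive t) → motive (node Y ts)) : ∀ T, motive T
  | .node Y ts => node Y ts fun t _ => ind node t
decreasing_by
  have := List.sizeOf_lt_of_mem ‹t ∈ ts›
  simp only [FTree.node.sizeOf_spec]
  omega

theorem isSubtree_node_iff {R : FTree α} {Y : Finset α} {ts : List (FTree α)} :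
    IsSubtree R (node Y ts) ↔ R = node Y ts ∨ ∃ t ∈ ts, IsSubtree R t := by
  constructor
  · rintro (_ | ⟨hRt, ht⟩)
    · exact Or.inl rfl
    · exact Or.inr ⟨_, ht, hRt⟩
  · rintro (rfl | ⟨t, ht, hRt⟩)
    · exact .refl _
    · exact .child hRt ht

theorem IsSubtree.trans {R S T : FTree α} (hRS : IsSubtree R S) (hST : IsSubtree S T) :
    IsSubtree R T := by
  induction hST with
  | refl => exact hRS
  | child _ ht ih => exact .child ih ht

theorem iff_exists_isSubtree {p q : FTree α → Prop}
    (h : ∀ Y ts, q (node Y ts) ↔ p (node Y ts) ∨ ∃ t ∈ ts, q t) (T : FTree α) :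
    q T ↔ ∃ R, IsSubtree R T ∧ p R := by
  induction T using ind with
  | node Y ts ih =>
    simp only [h, isSubtree_node_iff]
    constructor
    · rintro (hp | ⟨t, ht, hqt⟩)
      · exact ⟨_, Or.inl rfl, hp⟩
      · obtain ⟨R, hR, hpR⟩ := (ih t ht).mp hqt
        exact ⟨R, Or.inr ⟨t, ht, hR⟩, hpR⟩
    · rintro ⟨R, rfl | ⟨t, ht, hR⟩, hpR⟩
      · exact Or.inl hpR
      · exact Or.inr ⟨t, ht, (ih t ht).mpr ⟨R, hR, hpR⟩⟩

theorem exists_mem_labels_one_lt_card {T : FTree α} (h : T.dim ≠ 0) :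
    ∃ P ∈ T.labels, 1 < P.card := by
  by_contra! hle
  refine h (List.sum_eq_zero fun n hn => ?_)
  obtain ⟨P, hP, rfl⟩ := List.mem_map.mp hn
  have := hle P hP
  omega

variable [DecidableEq α]

theorem mem_support_node {Y : Finset α} {ts : List (FTree α)} {a : α} :
    a ∈ (node Y ts).support ↔ a ∈ Y ∨ ∃ t ∈ ts, a ∈ t.support := by
  induction ts with
  | nil => simp [support]
  | cons t ts ih => simp only [support, Finset.mem_union, ih]; simp; tauto

theorem mem_labels_node {Y : Finset α} {ts : List (FTree α)} {L : Finset α} :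
    L ∈ (node Y ts).labels ↔ L = Y ∨ ∃ t ∈ ts, L ∈ t.labels := by
  induction ts with
  | nil => simp [labels]
  | cons t ts ih => simp only [labels, List.mem_append, ih]; simp; tauto

theorem mem_nests_node {Y : Finset α} {ts : List (FTree α)} {N : Finset α} :
    N ∈ (node Y ts).nests ↔ N = (node Y ts).support ∨ ∃ t ∈ ts, N ∈ t.nests := by
  have : ∀ ts : List (FTree α), N ∈ nestsList ts ↔ ∃ t ∈ ts, N ∈ t.nests := by
    intro ts
    induction ts with
    | nil => simp [nestsList]
    | cons t ts ih => simp [nestsList, ih]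
  simp [nests, this]

theorem label_subset_support (T : FTree α) : T.label ⊆ T.support := by
  cases T
  exact fun a ha => mem_support_node.mpr (Or.inl ha)

theorem mem_support_iff {T : FTree α} {a : α} :
    a ∈ T.support ↔ ∃ R, IsSubtree R T ∧ a ∈ R.label :=
  iff_exists_isSubtree (q := (a ∈ ·.support)) (p := (a ∈ ·.label))
    (fun _ _ => mem_support_node) T

theorem mem_labels_iff {T : FTree α} {L : Finset α} :
    L ∈ T.labels ↔ ∃ R, IsSubtree R T ∧ R.label = L :=
  iff_exists_isSubtree (q := (L ∈ ·.labels)) (p := (·.label = L))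
    (fun _ _ => by rw [mem_labels_node, eq_comm]; rfl) T

theorem mem_nestSet_iff {T : FTree α} {N : Finset α} :
    N ∈ T.nestSet ↔ ∃ R, IsSubtree R T ∧ R.support = N := by
  rw [nestSet, List.mem_toFinset]
  exact iff_exists_isSubtree (q := (N ∈ ·.nests)) (p := (·.support = N))
    (fun _ _ => by rw [mem_nests_node, eq_comm]) T

theorem IsSubtree.support_mem_nestSet {R T : FTree α} (h : IsSubtree R T) :
    R.support ∈ T.nestSet :=
  mem_nestSet_iff.mpr ⟨R, h, rfl⟩

theorem IsSubtree.support_subset {R T : FTree α} (h : IsSubtree R T) : R.support ⊆ T.support :=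
  fun _ ha =>
    let ⟨R', hR', haR'⟩ := mem_support_iff.mp ha
    mem_support_iff.mpr ⟨R', hR'.trans h, haR'⟩

theorem subtreeAtList_eq_some {ts : List (FTree α)} {X : Finset α} {R : FTree α}
    (h : subtreeAtList ts X = some R) : ∃ t ∈ ts, t.subtreeAt X = some R := by
  induction ts with
  | nil => simp [subtreeAtList] at h
  | cons t ts ih =>
    rw [subtreeAtList] at h
    cases ht : t.subtreeAt X with
    | none =>
      rw [ht] at h
      obtain ⟨t', ht', h'⟩ := ih h
      exact ⟨t', List.mem_cons_of_mem _ ht', h'⟩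
    | some R' => rw [ht] at h; exact ⟨t, List.mem_cons_self, ht.trans h⟩

theorem subtreeAtList_eq_none {ts : List (FTree α)} {X : Finset α}
    (h : subtreeAtList ts X = none) : ∀ t ∈ ts, t.subtreeAt X = none := by
  induction ts with
  | nil => simp
  | cons t ts ih =>
    rw [subtreeAtList] at h
    cases ht : t.subtreeAt X with
    | none =>
      rw [ht] at h
      simpa [ht] using ih h
    | some R' => simp [ht] at h

theorem subtreeAt_eq_some {T R : FTree α} {X : Finset α} (h : T.subtreeAt X = some R) :
    IsSubtree R T ∧ R.label = X := by
  induction T using ind with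
  | node Y ts ih =>
    rw [subtreeAt] at h
    split_ifs at h with hY
    · cases h; exact ⟨.refl _, hY⟩
    · obtain ⟨t, ht, htR⟩ := subtreeAtList_eq_some h
      obtain ⟨hRt, rfl⟩ := ih t ht htR
      exact ⟨.child hRt ht, rfl⟩

theorem subtreeAt_ne_none {R T : FTree α} (h : IsSubtree R T) : T.subtreeAt R.label ≠ none := by
  induction h with
  | refl => cases R; simp [subtreeAt, label]
  | @child t u _ ht ih =>
    cases u
    rw [subtreeAt]
    split_ifs
    · simp
    · exact fun hnone => ih (subtreeAtList_eq_none hnone t ht)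

theorem CoveredBy.exists_nestSet_eq_insert {S V : FTree α} (h : CoveredBy S V) :
    ∃ N, S.nestSet = insert N V.nestSet := by
  obtain ⟨N, hN, -, hV⟩ := h
  exact ⟨N, by rw [hV]; exact (Finset.insert_erase (List.mem_toFinset.mpr hN)).symm⟩

end FTree

namespace IsConstruct

open NHypergraph FTree

variable {α : Type*} [LinearOrder α] {H : NHypergraph α} {Y : Finset α} {ts : List (FTree α)}
  {S T t : FTree α}

theorem label_nonempty (h : IsConstruct H (FTree.node Y ts)) : Y.Nonempty := by
  cases h; assumption

theorem isComponent_child (h : IsConstruct H (FTree.node Y ts)) (ht : t ∈ ts) :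
    (H.restrict (H.verts \ Y)).IsComponent t.support := by
  cases h with
  | node _ _ _ _ hmem => exact hmem t ht

theorem exists_child_support_eq (h : IsConstruct H (FTree.node Y ts)) {C : Finset α}
    (hC : (H.restrict (H.verts \ Y)).IsComponent C) : ∃ t ∈ ts, t.support = C := by
  cases h with
  | node _ _ _ _ _ hcover => exact hcover C hC

theorem pairwise_children (h : IsConstruct H (FTree.node Y ts)) :
    ts.Pairwise fun a b => a.support.max < b.support.max := by
  cases h; assumption

theorem child (h : IsConstruct H (FTree.node Y ts)) (ht : t ∈ ts) :
    IsConstruct (H.restrict t.support) t := by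
  cases h with
  | node _ _ _ _ _ _ _ hchild => exact hchild t ht

theorem child_support_subset (h : IsConstruct H (FTree.node Y ts)) (ht : t ∈ ts) :
    t.support ⊆ H.verts \ Y :=
  (h.isComponent_child ht).subset_restrict

theorem child_eq_of_mem (h : IsConstruct H (FTree.node Y ts)) {t' : FTree α} (ht : t ∈ ts)
    (ht' : t' ∈ ts) {a : α} (ha : a ∈ t.support) (ha' : a ∈ t'.support) : t = t' :=
  List.inj_on_of_nodup_map (List.pairwise_map.mpr h.pairwise_children).nodup ht ht' <| by
    rw [(h.isComponent_child ht).eq_of_mem (h.isComponent_child ht') ha ha']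

theorem support_eq (h : IsConstruct H S) : S.support = H.verts := by
  obtain ⟨Y, ts⟩ := S
  ext a
  rw [mem_support_node]
  refine ⟨fun ha => ?_, fun ha => ?_⟩
  · rcases ha with ha | ⟨t, ht, ha⟩
    · cases h with
      | node _ _ _ hYsub => exact hYsub ha
    · exact (Finset.mem_sdiff.mp (h.child_support_subset ht ha)).1
  · by_cases haY : a ∈ Y
    · exact Or.inl haY
    · obtain ⟨C, hC, haC⟩ := exists_isComponent_mem (G := H.restrict (H.verts \ Y)) (v := a)
        (by simp [haY, ha])
      obtain ⟨t, ht, rfl⟩ := h.exists_child_support_eq hC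
      exact Or.inr ⟨t, ht, haC⟩

theorem support_nonempty (h : IsConstruct H S) : S.support.Nonempty := by
  obtain ⟨Y, ts⟩ := S
  exact h.label_nonempty.mono (label_subset_support _)

theorem of_isSubtree (h : IsConstruct H S) {R : FTree α} (hR : IsSubtree R S) :
    IsConstruct (H.restrict R.support) R := by
  induction hR generalizing H with
  | refl => rwa [h.support_eq, restrict_self]
  | @child t u hRt ht ih =>
    obtain ⟨Y, ts⟩ := u
    have := ih (h.child ht)
    rwa [restrict_restrict hRt.support_subset] at this

theorem support_subset_verts (h : IsConstruct H S) {R : FTree α} (hR : IsSubtree R S) :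
    R.support ⊆ H.verts :=
  h.support_eq ▸ hR.support_subset

theorem isComponent_of_isSubtree (h : IsConstruct H S) {R c : FTree α} (hR : IsSubtree R S)
    (hc : c ∈ R.children) : (H.restrict (R.support \ R.label)).IsComponent c.support := by
  have hRv := h.support_subset_verts hR
  obtain ⟨L, cs⟩ := R
  have := (h.of_isSubtree hR).isComponent_child hc
  rwa [restrict_verts_of_subset hRv, restrict_restrict Finset.sdiff_subset] at this

theorem connected_of_isSubtree (hH : H.Connected) (h : IsConstruct H S) {R : FTree α}
    (hR : IsSubtree R S) : (H.restrict R.support).Connected := by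
  induction h generalizing R with
  | node Y ts hY hYsub hmem hcover hsorted hchild ih =>
    rcases isSubtree_node_iff.mp hR with rfl | ⟨t, ht, hRt⟩
    · rwa [(IsConstruct.node Y ts hY hYsub hmem hcover hsorted hchild).support_eq,
        restrict_self]
    · have := ih t ht (hmem t ht).connected_restrict hRt
      rwa [restrict_restrict hRt.support_subset] at this

theorem isSubtree_of_mem_label (h : IsConstruct H S) {R R' : FTree α} (hR : IsSubtree R S)
    (hR' : IsSubtree R' S) {w : α} (hwR : w ∈ R.label) (hwR' : w ∈ R'.support) :
    IsSubtree R R' := by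
  induction h generalizing R R' with
  | node Y ts hY hYsub hmem hcover hsorted hchild ih =>
    have hS := IsConstruct.node Y ts hY hYsub hmem hcover hsorted hchild
    rcases isSubtree_node_iff.mp hR' with rfl | ⟨t', ht', hR't'⟩
    · exact hR
    rcases isSubtree_node_iff.mp hR with rfl | ⟨t, ht, hRt⟩
    · exact absurd hwR (Finset.mem_sdiff.mp
        (hS.child_support_subset ht' (hR't'.support_subset hwR'))).2
    obtain rfl := hS.child_eq_of_mem ht ht'
      (hRt.support_subset (label_subset_support R hwR)) (hR't'.support_subset hwR')
    exact ih t ht hRt hR't' hwR hwR'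

theorem isLeast_support (h : IsConstruct H S) {R : FTree α} (hR : IsSubtree R S) {w : α}
    (hw : w ∈ R.label) : IsLeast {N | N ∈ S.nestSet ∧ w ∈ N} R.support := by
  refine ⟨⟨hR.support_mem_nestSet, label_subset_support R hw⟩, ?_⟩
  rintro N ⟨hN, hwN⟩
  obtain ⟨R', hR', rfl⟩ := mem_nestSet_iff.mp hN
  exact (h.isSubtree_of_mem_label hR hR' hw hwN).support_subset

theorem mem_label_iff (h : IsConstruct H (FTree.node Y ts)) {a : α} :
    a ∈ Y ↔ a ∈ H.verts ∧ ∀ N ∈ (FTree.node Y ts).nestSet, a ∈ N → N = H.verts := by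
  rw [← h.support_eq]
  refine ⟨fun ha => ⟨label_subset_support _ ha, fun N hN haN => ?_⟩, fun ⟨ha, hroot⟩ => ?_⟩
  · obtain ⟨R, hR, rfl⟩ := mem_nestSet_iff.mp hN
    exact hR.support_subset.antisymm ((h.isLeast_support (.refl _) ha).2 ⟨hN, haN⟩)
  · rcases mem_support_node.mp ha with ha | ⟨t, ht, hat⟩
    · exact ha
    · have htS : IsSubtree t (FTree.node Y ts) := .child (.refl t) ht
      obtain ⟨y, hy⟩ := h.label_nonempty
      have hyt : y ∈ t.support := by
        rw [hroot _ htS.support_mem_nestSet hat]; exact label_subset_support _ hy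
      exact absurd hy (Finset.mem_sdiff.mp (h.child_support_subset ht hyt)).2

theorem mem_child_nestSet_iff (h : IsConstruct H (FTree.node Y ts)) (ht : t ∈ ts)
    {N : Finset α} : N ∈ t.nestSet ↔ N ∈ (FTree.node Y ts).nestSet ∧ N ⊆ t.support := by
  simp only [mem_nestSet_iff]
  constructor
  · rintro ⟨R, hR, rfl⟩
    exact ⟨⟨R, .child hR ht, rfl⟩, hR.support_subset⟩
  · rintro ⟨⟨R, hR, rfl⟩, hRt⟩
    obtain ⟨a, ha⟩ := (h.of_isSubtree hR).support_nonempty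
    rcases isSubtree_node_iff.mp hR with rfl | ⟨t', ht', hRt'⟩
    · obtain ⟨y, hy⟩ := h.label_nonempty
      exact absurd hy (Finset.mem_sdiff.mp
        (h.child_support_subset ht (hRt (label_subset_support _ hy)))).2
    · obtain rfl := h.child_eq_of_mem ht' ht (hRt'.support_subset ha) (hRt ha)
      exact ⟨R, hRt', rfl⟩

theorem nestSet_injective (hS : IsConstruct H S) (hT : IsConstruct H T)
    (h : S.nestSet = T.nestSet) : S = T := by
  induction hS generalizing T with
  | node Y ss hY hYsub hmem hcover hsorted hchild ih =>
    have hS := IsConstruct.node Y ss hY hYsub hmem hcover hsorted hchild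
    obtain ⟨Z, us⟩ := T
    obtain rfl : Y = Z := by
      ext a
      rw [hS.mem_label_iff, hT.mem_label_iff, h]
    have hmatch : ∀ s ∈ ss, ∀ u ∈ us, s.support = u.support → s = u := by
      intro s hs u hu hsu
      refine ih s hs (hsu ▸ hT.child hu) (Finset.ext fun N => ?_)
      rw [hS.mem_child_nestSet_iff hs, hT.mem_child_nestSet_iff hu, h, hsu]
    have hmem_iff : ∀ s, s ∈ ss ↔ s ∈ us := by
      refine fun s => ⟨fun hs => ?_, fun hu => ?_⟩
      · obtain ⟨u, hu, hus⟩ := hT.exists_child_support_eq (hmem s hs)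
        exact hmatch s hs u hu hus.symm ▸ hu
      · obtain ⟨s', hs', hs's⟩ := hS.exists_child_support_eq (hT.isComponent_child hu)
        exact hmatch s' hs' s hu hs's ▸ hs'
    have hnodup : ∀ {l : List (FTree α)}, l.Pairwise (fun a b => a.support.max < b.support.max) →
        l.Nodup := fun hl => (List.pairwise_map.mpr hl).nodup.of_map _
    rw [List.Perm.eq_of_pairwise (fun _ _ _ _ hab hba => absurd hab (lt_asymm hba)) hsorted
      hT.pairwise_children ((List.perm_ext_iff_of_nodup (hnodup hsorted)
        (hnodup hT.pairwise_children)).mpr hmem_iff)]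

end IsConstruct

namespace IsConstruction

open NHypergraph FTree

variable {α : Type*} [LinearOrder α] {H : NHypergraph α} {S T V R : FTree α}
  {A : Finset (Finset α)} {N NS NT W : Finset α} {x y w : α}

theorem exists_isSubtree_suppAt (hS : IsConstruction H S) (hw : w ∈ H.verts) :
    ∃ R, IsSubtree R S ∧ R.label = {w} ∧ S.suppAt {w} = R.support := by
  obtain ⟨R₀, hR₀, hwR₀⟩ := mem_support_iff.mp (hS.1.support_eq ▸ hw)
  obtain ⟨a, ha⟩ := Finset.card_eq_one.mp (hS.2 _ (mem_labels_iff.mpr ⟨R₀, hR₀, rfl⟩))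
  obtain rfl : a = w := by rw [ha] at hwR₀; exact (Finset.mem_singleton.mp hwR₀).symm
  obtain ⟨R, hR⟩ := Option.ne_none_iff_exists'.mp (ha ▸ subtreeAt_ne_none hR₀)
  exact ⟨R, (subtreeAt_eq_some hR).1, (subtreeAt_eq_some hR).2, by simp [suppAt, hR]⟩

theorem isLeast_suppAt (hS : IsConstruction H S) (hw : w ∈ H.verts) :
    IsLeast {N | N ∈ S.nestSet ∧ w ∈ N} (S.suppAt {w}) := by
  obtain ⟨R, hR, hRw, hsupp⟩ := hS.exists_isSubtree_suppAt hw
  exact hsupp ▸ hS.1.isLeast_support hR (hRw ▸ Finset.mem_singleton_self w)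

theorem mem_suppAt (hS : IsConstruction H S) (hw : w ∈ H.verts) : w ∈ S.suppAt {w} :=
  (hS.isLeast_suppAt hw).1.2

theorem suppAt_ne (hS : IsConstruction H S) {w' : α} (hw : w ∈ H.verts) (hw' : w' ∈ H.verts)
    (hne : w ≠ w') : S.suppAt {w} ≠ S.suppAt {w'} := by
  intro heq
  obtain ⟨⟨L, cs⟩, hR, hRw : L = {w}, hsupp⟩ := hS.exists_isSubtree_suppAt hw
  have hw'R : w' ∈ (FTree.node L cs).support := hsupp ▸ heq ▸ hS.mem_suppAt hw'
  obtain ⟨c, hc, hw'c⟩ : ∃ c ∈ cs, w' ∈ c.support := by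
    refine (mem_support_node.mp hw'R).resolve_left fun h => hne ?_
    rw [hRw] at h
    exact (Finset.mem_singleton.mp h).symm
  have hcS : IsSubtree c S := (IsSubtree.child (u := FTree.node L cs) (.refl c) hc).trans hR
  have hwc : w ∈ c.support :=
    (hS.isLeast_suppAt hw').2 ⟨hcS.support_mem_nestSet, hw'c⟩ (heq ▸ hS.mem_suppAt hw)
  have := (hS.1.isComponent_of_isSubtree hR hc).subset_restrict hwc
  exact (Finset.mem_sdiff.mp this).2 (hRw ▸ Finset.mem_singleton_self w)

theorem suppAt_eq_or (hS : IsConstruction H S) (hV : IsConstruct H V)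
    (hSV : S.nestSet = insert N V.nestSet) (hR : IsSubtree R V) (hx : x ∈ R.label) :
    S.suppAt {x} = N ∨ S.suppAt {x} = R.support := by
  have hSx := hS.isLeast_suppAt (hV.support_subset_verts hR (label_subset_support R hx))
  have hRS : R.support ∈ S.nestSet := hSV ▸ Finset.mem_insert_of_mem hR.support_mem_nestSet
  refine (Finset.mem_insert.mp (hSV ▸ hSx.1.1)).imp_right fun hV' => ?_
  exact (hSx.2 ⟨hRS, label_subset_support R hx⟩).antisymm
    ((hV.isLeast_support hR hx).2 ⟨hV', hSx.1.2⟩)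

theorem isComponent_of_suppAt_eq (hS : IsConstruction H S) (hV : IsConstruct H V)
    (hSV : S.nestSet = insert N V.nestSet) (hR : IsSubtree R V) (hx : x ∈ R.label)
    (hy : y ∈ R.label) (hxy : x ≠ y) (hSy : S.suppAt {y} = R.support) :
    (H.restrict (R.support \ {y})).IsComponent N := by
  obtain ⟨⟨L, cs⟩, hRy, hL : L = {y}, hsupp⟩ :=
    hS.exists_isSubtree_suppAt (hV.support_subset_verts hR (label_subset_support R hy))
  rw [hSy] at hsupp
  obtain ⟨c, hc, hxc⟩ : ∃ c ∈ cs, x ∈ c.support := by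
    refine (mem_support_node.mp (hsupp ▸ label_subset_support R hx)).resolve_left fun h => ?_
    exact hxy (Finset.mem_singleton.mp (hL ▸ h))
  have hcomp : (H.restrict (R.support \ {y})).IsComponent c.support := by
    rw [hsupp, ← hL]
    exact hS.1.isComponent_of_isSubtree hRy hc
  have hcS : c.support ∈ S.nestSet :=
    ((IsSubtree.child (u := FTree.node L cs) (.refl c) hc).trans hRy).support_mem_nestSet
  rcases Finset.mem_insert.mp (hSV ▸ hcS) with hcN | hcV
  · exact hcN ▸ hcomp
  · have hyc : y ∈ c.support := (hV.isLeast_support hR hx).2 ⟨hcV, hxc⟩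
      (hsupp ▸ label_subset_support R hy)
    exact absurd (Finset.mem_singleton_self y) (Finset.mem_sdiff.mp (hcomp.subset_restrict hyc)).2

theorem suppAt_cases (hS : IsConstruction H S) (hV : IsConstruct H V)
    (hSV : S.nestSet = insert N V.nestSet) (hR : IsSubtree R V) (hx : x ∈ R.label)
    (hy : y ∈ R.label) (hxy : x ≠ y) :
    (S.suppAt {x} = N ∧ S.suppAt {y} = R.support ∧
        (H.restrict (R.support \ {y})).IsComponent N) ∨
      (S.suppAt {y} = N ∧ S.suppAt {x} = R.support ∧
        (H.restrict (R.support \ {x})).IsComponent N) := by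
  have hne := hS.suppAt_ne (hV.support_subset_verts hR (label_subset_support R hx))
    (hV.support_subset_verts hR (label_subset_support R hy)) hxy
  rcases hS.suppAt_eq_or hV hSV hR hx with hSx | hSx <;>
    rcases hS.suppAt_eq_or hV hSV hR hy with hSy | hSy
  · exact absurd (hSx.trans hSy.symm) hne
  · exact Or.inl ⟨hSx, hSy, hS.isComponent_of_suppAt_eq hV hSV hR hx hy hxy hSy⟩
  · exact Or.inr ⟨hSy, hSx, hS.isComponent_of_suppAt_eq hV hSV hR hy hx hxy.symm hSx⟩
  · exact absurd (hSx.trans hSy.symm) hne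

theorem eq_of_suppAt_isComponent (hS : IsConstruction H S) (hT : IsConstruction H T)
    (hSA : S.nestSet = insert NS A) (hTA : T.nestSet = insert NT A) {G : NHypergraph α}
    (hNS : G.IsComponent NS) (hNT : G.IsComponent NT) (hx : x ∈ H.verts)
    (hSx : S.suppAt {x} = NS) (hTx : T.suppAt {x} = NT) : S = T := by
  refine hS.1.nestSet_injective hT.1 ?_
  rw [hSA, hTA, hNS.eq_of_mem hNT (hSx ▸ hS.mem_suppAt hx) (hTx ▸ hT.mem_suppAt hx)]

theorem suppAt_subset_of_nestSet_eq_insert (hS : IsConstruction H S)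
    (hT : IsConstruction H T) (hSA : S.nestSet = insert NS A) (hTA : T.nestSet = insert NT A)
    {u : α} (hu : u ∈ H.verts) (hSu : S.suppAt {u} = NS) (hw : w ∈ H.verts) (hwu : w ≠ u) :
    T.suppAt {w} ⊆ S.suppAt {w} := by
  have hSw := hS.isLeast_suppAt hw
  have hA : S.suppAt {w} ∈ A :=
    (Finset.mem_insert.mp (hSA ▸ hSw.1.1)).resolve_left (hSu ▸ hS.suppAt_ne hw hu hwu)
  exact (hT.isLeast_suppAt hw).2 ⟨hTA ▸ Finset.mem_insert_of_mem hA, hSw.1.2⟩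

open Finset in
theorem sum_ne_of_flip (hS : IsConstruction H S) (hT : IsConstruction H T)
    (hSA : S.nestSet = insert NS A) (hTA : T.nestSet = insert NT A) (hW : W ∈ H.sat)
    (hxW : x ∈ W) (hyW : y ∈ W) (hxy : x ≠ y) {μ : α → ℝ} (hμ : μ x ≠ μ y)
    (hSx : S.suppAt {x} = NS) (hSy : S.suppAt {y} = W)
    (hTx : T.suppAt {x} = W) (hTy : T.suppAt {y} = NT)
    (hNS : (H.restrict (W \ {y})).IsComponent NS)
    (hNT : (H.restrict (W \ {x})).IsComponent NT) :
    ∑ w ∈ H.verts, μ w * (coordVec H S w : ℝ) ≠ ∑ w ∈ H.verts, μ w * (coordVec H T w : ℝ) := by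
  have hWv := (mem_sat.mp hW).1
  refine sum_mul_ne_of_shift hxy (hWv hxW) (hWv hyW) hμ
    (c := #{e ∈ H.sat | {x, y} ⊆ e ∧ e ⊆ W}) ?_ ?_ ?_ ?_
  · refine Nat.cast_ne_zero.mpr (card_ne_zero.mpr ⟨W, mem_filter.mpr ⟨hW, ?_, subset_refl W⟩⟩)
    exact insert_subset hxW (singleton_subset_iff.mpr hyW)
  · simp only [coordVec, hSx, hTx]
    exact_mod_cast H.card_sat_subset_eq_add hNS (hSx ▸ hS.mem_suppAt (hWv hxW))
  · simp only [coordVec, hSy, hTy]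
    rw [pair_comm]
    exact_mod_cast H.card_sat_subset_eq_add hNT (hTy ▸ hT.mem_suppAt (hWv hyW))
  · intro w hw hwx hwy
    simp only [coordVec]
    rw [(hS.suppAt_subset_of_nestSet_eq_insert hT hSA hTA (hWv hxW) hSx hw hwx).antisymm
      (hT.suppAt_subset_of_nestSet_eq_insert hS hTA hSA (hWv hyW) hTy hw hwy)]

end IsConstruction

/-- Corollary `Tamari-orientation-vector`.  Any vector `μ` with strictly
decreasing coordinates separates the endpoints of every edge of the Postnikov realization:
for distinct constructions `S, T` joined by an edge, `⟨μ, v^S⟩ ≠ ⟨μ, v^T⟩`, i.e. `μ` is an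
orientation vector. -/
theorem stmt10 {α : Type*} [LinearOrder α] (H : NHypergraph α) (hH : H.Connected)
    (μ : α → ℝ) (hμ : ∀ a b : α, a < b → μ b < μ a)
    (S T : FTree α) (hST : EdgeJoined H S T) :
    (∑ w ∈ H.verts, μ w * (coordVec H S w : ℝ)) ≠
      ∑ w ∈ H.verts, μ w * (coordVec H T w : ℝ) := by
  obtain ⟨hS, hT, hne, V, hV, hdim, hSV, hTV⟩ := hST
  obtain ⟨NS, hSV⟩ := hSV.exists_nestSet_eq_insert
  obtain ⟨NT, hTV⟩ := hTV.exists_nestSet_eq_insert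
  obtain ⟨P, hP, hPcard⟩ := FTree.exists_mem_labels_one_lt_card (hdim ▸ one_ne_zero)
  obtain ⟨x, hx, y, hy, hxy⟩ := Finset.one_lt_card.mp hPcard
  obtain ⟨R, hR, rfl⟩ := FTree.mem_labels_iff.mp hP
  have hWv := hV.support_subset_verts hR
  have hW : R.support ∈ H.sat := NHypergraph.mem_sat.mpr ⟨hWv, hV.connected_of_isSubtree hH hR⟩
  have hxW := FTree.label_subset_support R hx
  have hyW := FTree.label_subset_support R hy
  have hμxy : μ x ≠ μ y := (show StrictAnti μ from fun a b => hμ a b).injective.ne hxy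
  rcases hS.suppAt_cases hV hSV hR hx hy hxy with ⟨hSx, hSy, hNS⟩ | ⟨hSy, hSx, hNS⟩ <;>
    rcases hT.suppAt_cases hV hTV hR hx hy hxy with ⟨hTx, hTy, hNT⟩ | ⟨hTy, hTx, hNT⟩
  · exact absurd (hS.eq_of_suppAt_isComponent hT hSV hTV hNS hNT (hWv hxW) hSx hTx) hne
  · exact hS.sum_ne_of_flip hT hSV hTV hW hxW hyW hxy hμxy hSx hSy hTx hTy hNS hNT
  · exact (hT.sum_ne_of_flip hS hTV hSV hW hxW hyW hxy hμxy hTx hTy hSx hSy hNT hNS).symm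
  · exact absurd (hS.eq_of_suppAt_isComponent hT hSV hTV hNS hNT (hWv hyW) hSy hTy) hne

end
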